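/- Let (g,[·,·],φ) be a regular Hom-Lie algebra. Then g ⊕ g* with bracket [x+ξ, y+η]_s = [x,y] + ad⋆_x η − ad⋆_y ξ and structure map φ ⊕ (φ⁻¹)* is a Hom-Lie algebra (the semidirect product via the coadjoint representation). -/

import Mathlib

/-!
The Hom-Jacobi identity, written in Leibniz form, says that `ad` is a representation of `g` on
itself with respect to `φ`. Dualising a representation `ρ` with respect to `β` gives a
representation `ρ⋆_x = ρ*_{φ(x)} ∘ (β⁻²)*` with respect to `(β⁻¹)*`, so `ad⋆` is a representation
on `g*` with respect to `(φ⁻¹)*`. Finally, the semidirect product `g ⋉_ρ V` with structure map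
`φ ⊕ β` is a Hom-Lie algebra for any representation: its `V`-component of the Hom-Jacobi
identity cancels by the second representation axiom, and multiplicativity is the first one.
-/

open LinearMap Module

/-- A (regular, i.e. multiplicative with invertible structure map) Hom-Lie algebra. -/
structure HomLieAlgebra (K g : Type*) [Field K] [AddCommGroup g] [Module K g] where
  bracket : g →ₗ[K] g →ₗ[K] g
  phi : g ≃ₗ[K] g
  skew : ∀ x y, bracket x y = - bracket y x
  phi_bracket : ∀ x y, phi (bracket x y) = bracket (phi x) (phi y)
  jacobi : ∀ x y z,
    bracket (phi x) (bracket y z) + bracket (phi y) (bracket z x)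
      + bracket (phi z) (bracket x y) = 0

variable {K g V : Type*} [Field K] [AddCommGroup g] [Module K g]
  [AddCommGroup V] [Module K V]

/-- `ρ` is a representation of the Hom-Lie algebra `L` on `V` with respect to `β`. -/
def HomLieAlgebra.IsRep (L : HomLieAlgebra K g) (β : V ≃ₗ[K] V)
    (ρ : g →ₗ[K] V →ₗ[K] V) : Prop :=
  (∀ x u, ρ (L.phi x) (β u) = β (ρ x u)) ∧
  (∀ x y u, ρ (L.bracket x y) (β u) = ρ (L.phi x) (ρ y u) - ρ (L.phi y) (ρ x u))

/-- The coadjoint representation: `ad⋆_x ξ = ad*_{φ(x)}((φ⁻²)*(ξ))`, i.e.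
`⟨ad⋆_x ξ, y⟩ = −⟨ξ, φ⁻²([φ(x), y])⟩`. -/
def coadRep (L : HomLieAlgebra K g) (x : g) (ξ : Dual K g) : Dual K g :=
  - (ξ ∘ₗ L.phi.symm.toLinearMap ∘ₗ L.phi.symm.toLinearMap ∘ₗ L.bracket (L.phi x))

/-- The semidirect product bracket `[x+ξ, y+η]_s = [x,y] + ad⋆_x η − ad⋆_y ξ` on `g ⊕ g*`. -/
def sdBracket (L : HomLieAlgebra K g) (p q : g × Dual K g) : g × Dual K g :=
  (L.bracket p.1 q.1, coadRep L p.1 q.2 - coadRep L q.1 p.2)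

/-- The structure map `φ ⊕ (φ⁻¹)*` on `g ⊕ g*`. -/
def sdPhi (L : HomLieAlgebra K g) (p : g × Dual K g) : g × Dual K g :=
  (L.phi p.1, p.2 ∘ₗ L.phi.symm.toLinearMap)

namespace HomLieAlgebra

variable (L : HomLieAlgebra K g)

theorem leibniz (a b c : g) :
    L.bracket (L.phi a) (L.bracket b c)
      = L.bracket (L.bracket a b) (L.phi c) + L.bracket (L.phi b) (L.bracket a c) := by
  have h := L.jacobi a b c
  rw [L.skew c a, map_neg, L.skew (L.phi c)] at h
  rw [← sub_eq_zero, ← h]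
  abel

theorem isRep_bracket : L.IsRep L.phi L.bracket :=
  ⟨fun x u => (L.phi_bracket x u).symm, fun x y u => by rw [L.leibniz]; abel⟩

variable {L} {β : V ≃ₗ[K] V} {ρ : g →ₗ[K] V →ₗ[K] V}

theorem IsRep.symm_apply (hρ : L.IsRep β ρ) (x : g) (u : V) :
    β.symm (ρ (L.phi x) u) = ρ x (β.symm u) := by
  rw [β.symm_apply_eq, ← hρ.1, β.apply_symm_apply]

variable (L β ρ)

def dualRep : g →ₗ[K] Dual K V →ₗ[K] Dual K V :=
  LinearMap.mk₂ K (fun x ξ => -(ξ ∘ₗ β.symm.toLinearMap ∘ₗ β.symm.toLinearMap ∘ₗ ρ (L.phi x)))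
    (fun x y ξ => by ext; simp only [map_add, comp_add, neg_add])
    (fun c x ξ => by ext; simp)
    (fun x ξ η => by ext; simp only [add_comp, neg_add])
    (fun c x ξ => by ext; simp)

theorem dualRep_apply (x : g) (ξ : Dual K V) (u : V) :
    L.dualRep β ρ x ξ u = -ξ (β.symm (β.symm (ρ (L.phi x) u))) :=
  rfl

variable {L β ρ}

theorem IsRep.dual (hρ : L.IsRep β ρ) : L.IsRep β.symm.dualMap (L.dualRep β ρ) := by
  constructor
  · intro x ξ
    ext u
    simp only [dualRep_apply, LinearEquiv.dualMap_apply, hρ.symm_apply]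
  · intro x y ξ
    ext u
    obtain ⟨v, rfl⟩ : ∃ v, u = β (β v) := ⟨β.symm (β.symm u), by simp⟩
    simp only [dualRep_apply, LinearEquiv.dualMap_apply, LinearMap.sub_apply, hρ.symm_apply,
      LinearEquiv.symm_apply_apply, hρ.2, map_sub]
    abel

variable (L ρ)

def semidirectBracket : (g × V) →ₗ[K] (g × V) →ₗ[K] (g × V) :=
  LinearMap.mk₂ K (fun p q => (L.bracket p.1 q.1, ρ p.1 q.2 - ρ q.1 p.2))
    (fun p q r => by
      ext <;> simp only [Prod.fst_add, Prod.snd_add, map_add, LinearMap.add_apply]; abel)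
    (fun c p q => by ext <;> simp [smul_sub])
    (fun p q r => by
      ext <;> simp only [Prod.fst_add, Prod.snd_add, map_add, LinearMap.add_apply]; abel)
    (fun c p q => by ext <;> simp [smul_sub])

theorem semidirectBracket_apply (p q : g × V) :
    L.semidirectBracket ρ p q = (L.bracket p.1 q.1, ρ p.1 q.2 - ρ q.1 p.2) :=
  rfl

variable {L ρ}

def semidirectProduct (hρ : L.IsRep β ρ) : HomLieAlgebra K (g × V) where
  bracket := L.semidirectBracket ρ
  phi := L.phi.prodCongr β
  skew p q := by
    simp only [semidirectBracket_apply, Prod.neg_mk, neg_sub, ← L.skew]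
  phi_bracket p q := by
    simp only [semidirectBracket_apply, LinearEquiv.prodCongr_apply, L.phi_bracket,
      map_sub, hρ.1]
  jacobi p q r := by
    simp only [semidirectBracket_apply, LinearEquiv.prodCongr_apply, map_sub, hρ.2,
      Prod.mk_add_mk, L.jacobi, Prod.mk_eq_zero, true_and]
    abel

end HomLieAlgebra

/-- `(g ⊕ g*, [·,·]_s, φ ⊕ (φ⁻¹)*)` is a Hom-Lie algebra. -/
theorem sd_homLie (L : HomLieAlgebra K g) :
    (∀ p q : g × Dual K g, sdBracket L p q = - sdBracket L q p) ∧
    (∀ p q : g × Dual K g, sdPhi L (sdBracket L p q) = sdBracket L (sdPhi L p) (sdPhi L q)) ∧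
    (∀ p q r : g × Dual K g,
      sdBracket L (sdPhi L p) (sdBracket L q r)
        + sdBracket L (sdPhi L q) (sdBracket L r p)
        + sdBracket L (sdPhi L r) (sdBracket L p q) = 0) := by
  let S := L.semidirectProduct L.isRep_bracket.dual
  -- `coadRep L` is `L.dualRep L.phi L.bracket` on the nose.
  have hbracket : sdBracket L = fun p q => S.bracket p q := rfl
  have hphi : sdPhi L = S.phi := rfl
  rw [hbracket, hphi]
  exact ⟨S.skew, S.phi_bracket, S.jacobi⟩
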